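/- arXiv:1809.09516 — 2 statements merged into one kernel-verified Lean document; each statement's English description precedes it below -/
import Mathlib

section
/- Let m ≥ 1, let A be a finite set, let V ⊆ A be nonempty, and for each i ∈ V let f_i : ℝ^m → ℝ ∪ {+∞} be a proper lower semicontinuous convex function with convex conjugate f_i*. Let ζ : V → ℝ^m, let w : A → ℝ^m satisfy ∑_{α∈A} w_α = ∑_{i∈V} ζ_i, let s : A → [0,∞) satisfy ∑_{α∈A} s_α = |V| and w_α = 0 whenever s_α = 0, and let x*, m̄ ∈ ℝ^m. Then (|V|/2)‖x* − m̄‖² + ∑_{i∈V} f_i(x*) − (|V|/2)‖m̄‖² + ∑_{i∈V} f_i*(ζ_i) + ∑_{α ∈ A, s_α > 0} (s_α/2)‖m̄ − w_α/s_α‖² ≥ ∑_{α ∈ A, s_α > 0} (s_α/2)‖x* − (m̄ − w_α/s_α)‖². (Here the left-hand side is interpreted in ℝ ∪ {+∞}.) -/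
/-!
Expanding the squares, for `s_α > 0`
`(s_α/2)‖x* − (m̄ − w_α/s_α)‖² = (s_α/2)‖m̄ − w_α/s_α‖² + (s_α/2)(‖x*‖² − 2⟪x*, m̄⟫) + ⟪x*, w_α⟫`.
Summing with `∑ s_α = |V|` and `∑ w_α = ∑ ζ_i`, the inequality becomes
`∑_i ⟪ζ_i, x*⟫ ≤ ∑_i f_i(x*) + ∑_i f_i*(ζ_i)`, which is Fenchel–Young for each proper `f_i`.
-/

open scoped BigOperators

noncomputable section

abbrev Euc (m : ℕ) := EuclideanSpace ℝ (Fin m)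

def EProper {E : Type*} (f : E → EReal) : Prop :=
  (∃ x, f x ≠ ⊤) ∧ ∀ x, f x ≠ ⊥

def EConvexOn {E : Type*} [AddCommGroup E] [Module ℝ E] (f : E → EReal) : Prop :=
  ∀ x y : E, ∀ a b : ℝ, 0 ≤ a → 0 ≤ b → a + b = 1 →
    f (a • x + b • y) ≤ (a : EReal) * f x + (b : EReal) * f y

def econj {E : Type*} [NormedAddCommGroup E] [InnerProductSpace ℝ E]
    (f : E → EReal) (z : E) : EReal :=
  ⨆ x : E, ((inner ℝ z x : ℝ) : EReal) - f x

theorem EReal.coe_finset_sum {ι : Type*} (s : Finset ι) (g : ι → ℝ) :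
    ((∑ i ∈ s, g i : ℝ) : EReal) = ∑ i ∈ s, (g i : EReal) :=
  map_sum (⟨⟨Real.toEReal, EReal.coe_zero⟩, EReal.coe_add⟩ : ℝ →+ EReal) g s

section FenchelYoung

variable {E : Type*} [NormedAddCommGroup E] [InnerProductSpace ℝ E]

theorem inner_sub_le_econj (f : E → EReal) (z x : E) :
    ((inner ℝ z x : ℝ) : EReal) - f x ≤ econj f z :=
  le_iSup (fun y : E => ((inner ℝ z y : ℝ) : EReal) - f y) x

theorem econj_ne_bot {f : E → EReal} (hf : EProper f) (z : E) : econj f z ≠ ⊥ := by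
  obtain ⟨⟨x₀, hx₀⟩, -⟩ := hf
  have hreal : ((inner ℝ z x₀ : ℝ) : EReal) - f x₀ ≠ ⊥ := by
    simp [sub_eq_add_neg, EReal.add_eq_bot_iff, hx₀]
  exact ne_bot_of_le_ne_bot hreal (inner_sub_le_econj f z x₀)

-- Properness excludes `f x = ⊤` together with `econj f z = ⊥`, where `⊤ + ⊥ = ⊥` in `EReal`.
theorem inner_le_add_econj {f : E → EReal} (hf : EProper f) (z x : E) :
    ((inner ℝ z x : ℝ) : EReal) ≤ f x + econj f z := by
  rw [add_comm, ← EReal.sub_le_iff_le_add (.inl (hf.2 x)) (.inr (econj_ne_bot hf z))]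
  exact inner_sub_le_econj f z x

theorem sum_inner_le_sum_add_sum_econj {ι : Type*} (V : Finset ι) {f : ι → E → EReal}
    (hf : ∀ i ∈ V, EProper (f i)) (ζ : ι → E) (x : E) :
    ((∑ i ∈ V, inner ℝ (ζ i) x : ℝ) : EReal) ≤ ∑ i ∈ V, f i x + ∑ i ∈ V, econj (f i) (ζ i) := by
  rw [EReal.coe_finset_sum, ← Finset.sum_add_distrib]
  exact Finset.sum_le_sum fun i hi => inner_le_add_econj (hf i hi) (ζ i) x

end FenchelYoung

section ShiftedSquares

variable {E : Type*} [NormedAddCommGroup E] [InnerProductSpace ℝ E]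

theorem half_mul_norm_sub_sub_smul_sq (x c w : E) {s : ℝ} (hs : s ≠ 0) :
    s / 2 * ‖x - (c - s⁻¹ • w)‖ ^ 2
      = s / 2 * ‖c - s⁻¹ • w‖ ^ 2 + (s / 2 * ‖x‖ ^ 2 - s * inner ℝ x c + inner ℝ x w) := by
  rw [norm_sub_sq_real x, inner_sub_right, real_inner_smul_right]
  field_simp
  ring

theorem ite_half_mul_norm_sub_sub_smul_sq (x c w : E) {s : ℝ} (hs : 0 ≤ s) (hw : s = 0 → w = 0) :
    (if 0 < s then s / 2 * ‖x - (c - s⁻¹ • w)‖ ^ 2 else 0)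
      = (if 0 < s then s / 2 * ‖c - s⁻¹ • w‖ ^ 2 else 0)
        + (s / 2 * ‖x‖ ^ 2 - s * inner ℝ x c + inner ℝ x w) := by
  rcases hs.lt_or_eq with hpos | hzero
  · simp only [if_pos hpos]
    exact half_mul_norm_sub_sub_smul_sq x c w hpos.ne'
  · subst hzero
    simp [hw rfl]

theorem sum_ite_half_mul_norm_sub_sub_smul_sq {ι : Type*} (t : Finset ι) (x c : E) {s : ι → ℝ}
    {w : ι → E} (hs : ∀ α ∈ t, 0 ≤ s α) (hw : ∀ α ∈ t, s α = 0 → w α = 0) :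
    ∑ α ∈ t, (if 0 < s α then s α / 2 * ‖x - (c - (s α)⁻¹ • w α)‖ ^ 2 else 0)
      = ∑ α ∈ t, (if 0 < s α then s α / 2 * ‖c - (s α)⁻¹ • w α‖ ^ 2 else 0)
        + ((∑ α ∈ t, s α) / 2 * (‖x - c‖ ^ 2 - ‖c‖ ^ 2) + inner ℝ x (∑ α ∈ t, w α)) := by
  rw [Finset.sum_congr rfl fun α hα =>
      ite_half_mul_norm_sub_sub_smul_sq x c (w α) (hs α hα) (hw α hα),
    Finset.sum_add_distrib, Finset.sum_add_distrib, Finset.sum_sub_distrib, ← Finset.sum_mul,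
    ← Finset.sum_mul, ← Finset.sum_div, inner_sum, norm_sub_sq_real x c]
  ring

end ShiftedSquares

theorem stmt6_general {A : Type*} [Fintype A] (V : Finset A)
    (m : ℕ) (f : A → Euc m → EReal)
    (hfp : ∀ i ∈ V, EProper (f i))
    (ζ : A → Euc m) (w : A → Euc m) (hw : (∑ α : A, w α) = ∑ i ∈ V, ζ i)
    (s : A → ℝ) (hs0 : ∀ α, 0 ≤ s α) (hs1 : (∑ α : A, s α) = (V.card : ℝ))
    (hws : ∀ α, s α = 0 → w α = 0)
    (xstar mbar : Euc m) :
    ((∑ α : A, if 0 < s α then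
        (s α / 2) * ‖xstar - (mbar - (s α)⁻¹ • w α)‖ ^ 2 else 0 : ℝ) : EReal)
      ≤ ((((V.card : ℝ) / 2) * ‖xstar - mbar‖ ^ 2 : ℝ) : EReal)
          + (∑ i ∈ V, f i xstar)
          + ((-(((V.card : ℝ) / 2) * ‖mbar‖ ^ 2) : ℝ) : EReal)
          + (∑ i ∈ V, econj (f i) (ζ i))
          + ((∑ α : A, if 0 < s α then
              (s α / 2) * ‖mbar - (s α)⁻¹ • w α‖ ^ 2 else 0 : ℝ) : EReal) := by
  have hcoupling : inner ℝ xstar (∑ α, w α) = ∑ i ∈ V, inner ℝ (ζ i) xstar := by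
    rw [hw, inner_sum]
    exact Finset.sum_congr rfl fun i _ => real_inner_comm _ _
  rw [sum_ite_half_mul_norm_sub_sub_smul_sq Finset.univ xstar mbar (fun α _ => hs0 α)
    (fun α _ => hws α), hs1, hcoupling]
  set D := ∑ α : A, if 0 < s α then (s α / 2) * ‖mbar - (s α)⁻¹ • w α‖ ^ 2 else 0
  set a := (V.card : ℝ) / 2 * ‖xstar - mbar‖ ^ 2
  set b := -((V.card : ℝ) / 2 * ‖mbar‖ ^ 2)
  calc (((D + ((V.card : ℝ) / 2 * (‖xstar - mbar‖ ^ 2 - ‖mbar‖ ^ 2)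
          + ∑ i ∈ V, inner ℝ (ζ i) xstar)) : ℝ) : EReal)
      = ((a + b + D : ℝ) : EReal) + ((∑ i ∈ V, inner ℝ (ζ i) xstar : ℝ) : EReal) := by
        rw [← EReal.coe_add, EReal.coe_eq_coe_iff]
        ring
    _ ≤ ((a + b + D : ℝ) : EReal) + (∑ i ∈ V, f i xstar + ∑ i ∈ V, econj (f i) (ζ i)) :=
        add_le_add_right (sum_inner_le_sum_add_sum_econj V hfp ζ xstar) _
    _ = (a : EReal) + ∑ i ∈ V, f i xstar + (b : EReal) + ∑ i ∈ V, econj (f i) (ζ i) + D := by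
        push_cast
        abel

/-- duality-gap inequality (3.6): the primal objective at `x*` plus the
negated dual objective bounds the weighted sum `∑_{s_α>0} (s_α/2)‖x* − (m̄ − w_α/s_α)‖²`. -/
theorem stmt6 {A : Type*} [Fintype A] (V : Finset A) (hV : V.Nonempty)
    (m : ℕ) (hm : 1 ≤ m) (f : A → Euc m → EReal)
    (hfp : ∀ i ∈ V, EProper (f i)) (hfl : ∀ i ∈ V, LowerSemicontinuous (f i))
    (hfc : ∀ i ∈ V, EConvexOn (f i))
    (ζ : A → Euc m) (w : A → Euc m) (hw : (∑ α : A, w α) = ∑ i ∈ V, ζ i)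
    (s : A → ℝ) (hs0 : ∀ α, 0 ≤ s α) (hs1 : (∑ α : A, s α) = (V.card : ℝ))
    (hws : ∀ α, s α = 0 → w α = 0)
    (xstar mbar : Euc m) :
    ((∑ α : A, if 0 < s α then
        (s α / 2) * ‖xstar - (mbar - (s α)⁻¹ • w α)‖ ^ 2 else 0 : ℝ) : EReal)
      ≤ ((((V.card : ℝ) / 2) * ‖xstar - mbar‖ ^ 2 : ℝ) : EReal)
          + (∑ i ∈ V, f i xstar)
          + ((-(((V.card : ℝ) / 2) * ‖mbar‖ ^ 2) : ℝ) : EReal)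
          + (∑ i ∈ V, econj (f i) (ζ i))
          + ((∑ α : A, if 0 < s α then
              (s α / 2) * ‖mbar - (s α)⁻¹ • w α‖ ^ 2 else 0 : ℝ) : EReal) :=
  stmt6_general V m f hfp ζ w hw s hs0 hs1 hws xstar mbar
end
end

section
/- Let A be a finite set, and for each α ∈ A let n_α ≥ 1 and let g_α : ℝ^{n_α} → ℝ ∪ {+∞} be a proper convex function. Let h : ∏_{α∈A} ℝ^{n_α} → ℝ be a convex differentiable function, and define F(z) := ∑_{α∈A} g_α(z_α) + h(z). Suppose ẑ ∈ ∏_{α∈A} ℝ^{n_α} is blockwise optimal: for each α ∈ A, the point ẑ_α minimizes the function z_α ↦ g_α(z_α) + h(ẑ₁, …, z_α, …, ẑ_{|A|}) (all other blocks fixed at their values in ẑ). Then ẑ is a global minimizer of F. -/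
open scoped BigOperators

noncomputable section

private lemma ecoe_sum {A : Type*} (s : Finset A) (f : A → ℝ) :
    ((∑ a ∈ s, f a : ℝ) : EReal) = ∑ a ∈ s, (f a : EReal) := by
  induction s using Finset.cons_induction with
  | empty => simp
  | cons a s ha ih => rw [Finset.sum_cons, Finset.sum_cons, EReal.coe_add, ih]

private lemma esum_ne_bot {A : Type*} (s : Finset A) (f : A → EReal)
    (hf : ∀ a ∈ s, f a ≠ ⊥) : ∑ a ∈ s, f a ≠ ⊥ := by
  induction s using Finset.cons_induction with
  | empty => simp
  | cons a s ha ih =>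
    rw [Finset.sum_cons, Ne, EReal.add_eq_bot_iff]
    push_neg
    exact ⟨hf a (Finset.mem_cons_self a s),
      ih fun b hb => hf b (Finset.mem_cons_of_mem hb)⟩

/-- blockwise optimality implies global optimality: for
`F(z) = ∑_α g_α(z_α) + h(z)` with each `g_α` proper convex and `h` convex differentiable,
if `ẑ` minimizes in each block separately then `ẑ` is a global minimizer of `F`. -/
theorem stmt10 {A : Type*} [Fintype A] [DecidableEq A]
    (n : A → ℕ) (hn : ∀ α, 1 ≤ n α)
    (g : ∀ α : A, EuclideanSpace ℝ (Fin (n α)) → EReal)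
    (hgp : ∀ α, EProper (g α)) (hgc : ∀ α, EConvexOn (g α))
    (h : (∀ α : A, EuclideanSpace ℝ (Fin (n α))) → ℝ)
    (hhc : ConvexOn ℝ Set.univ h) (hhd : Differentiable ℝ h)
    (zhat : ∀ α : A, EuclideanSpace ℝ (Fin (n α)))
    (hblock : ∀ α : A, ∀ t : EuclideanSpace ℝ (Fin (n α)),
      g α (zhat α) + ((h zhat : ℝ) : EReal)
        ≤ g α t + ((h (Function.update zhat α t) : ℝ) : EReal)) :
    ∀ z : ∀ α : A, EuclideanSpace ℝ (Fin (n α)),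
      (∑ α : A, g α (zhat α)) + ((h zhat : ℝ) : EReal)
        ≤ (∑ α : A, g α (z α)) + ((h z : ℝ) : EReal) := by
  intro z
  -- finiteness of g at zhat
  have hzhat_ne_top : ∀ α, g α (zhat α) ≠ ⊤ := by
    intro α
    obtain ⟨x, hx⟩ := (hgp α).1
    intro hT
    have hb := hblock α x
    rw [hT, EReal.top_add_coe] at hb
    exact (EReal.add_lt_top hx (EReal.coe_ne_top _)).ne (top_le_iff.mp hb)
  by_cases hzt : ∃ α, g α (z α) = ⊤
  · -- RHS is ⊤
    obtain ⟨α, hα⟩ := hzt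
    have hs : ∑ β : A, g β (z β) = ⊤ := by
      rw [← Finset.add_sum_erase _ _ (Finset.mem_univ α), hα]
      exact EReal.top_add_of_ne_bot
        (esum_ne_bot _ _ fun b _ => (hgp b).2 _)
    rw [hs, EReal.top_add_coe]
    exact le_top
  push_neg at hzt
  -- real values
  set Gh : A → ℝ := fun α => (g α (zhat α)).toReal with hGh
  set Gz : A → ℝ := fun α => (g α (z α)).toReal with hGz
  have eGh : ∀ α, g α (zhat α) = ((Gh α : ℝ) : EReal) :=
    fun α => (EReal.coe_toReal (hzhat_ne_top α) ((hgp α).2 _)).symm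
  have eGz : ∀ α, g α (z α) = ((Gz α : ℝ) : EReal) :=
    fun α => (EReal.coe_toReal (hzt α) ((hgp α).2 _)).symm
  -- convexity of each g along the segment, in EReal
  have hφle : ∀ α, ∀ s : ℝ, 0 ≤ s → s ≤ 1 →
      g α ((1 - s) • zhat α + s • z α) ≤ (((1 - s) * Gh α + s * Gz α : ℝ) : EReal) := by
    intro α s hs0 hs1
    have := hgc α (zhat α) (z α) (1 - s) s (by linarith) hs0 (by ring)
    rwa [eGh, eGz, ← EReal.coe_mul, ← EReal.coe_mul, ← EReal.coe_add] at this
  set N : ℝ := (Fintype.card A : ℝ) with hN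
  -- the auxiliary function ε
  set w : A → ∀ β : A, EuclideanSpace ℝ (Fin (n β)) :=
    fun α => Pi.single α (z α - zhat α) with hw
  set ε : ℝ → ℝ := fun s =>
    h (zhat + s • (z - zhat)) + (N - 1) * h zhat
      - ∑ α : A, h (zhat + s • w α) with hε
  -- rewriting updates
  have updEq : ∀ (α : A) (s : ℝ),
      Function.update zhat α ((1 - s) • zhat α + s • z α)
        = zhat + s • w α := by
    intro α s
    funext β
    by_cases hβ : β = α
    · subst hβ
      simp only [Function.update_self, Pi.add_apply, Pi.smul_apply, hw, Pi.single_eq_same,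
        smul_sub, sub_smul, one_smul]
      abel
    · simp [hw, Function.update_of_ne hβ, Pi.single_eq_of_ne hβ]
  have segEq : ∀ s : ℝ, (1 - s) • zhat + s • z = zhat + s • (z - zhat) := by
    intro s
    rw [smul_sub, sub_smul, one_smul]
    abel
  set D : ℝ := (∑ α : A, Gz α + h z) - (∑ α : A, Gh α + h zhat) with hD
  -- the key inequality
  have key : ∀ s : ℝ, 0 ≤ s → s ≤ 1 → ε s ≤ s * D := by
    intro s hs0 hs1
    have h2 : ∀ α : A, Gh α + h zhat
        ≤ (g α ((1 - s) • zhat α + s • z α)).toReal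
          + h (zhat + s • w α) := by
      intro α
      have hub := hφle α s hs0 hs1
      have hptT : g α ((1 - s) • zhat α + s • z α) ≠ ⊤ :=
        ne_top_of_le_ne_top (EReal.coe_ne_top _) hub
      have ept : g α ((1 - s) • zhat α + s • z α)
          = (((g α ((1 - s) • zhat α + s • z α)).toReal : ℝ) : EReal) :=
        (EReal.coe_toReal hptT ((hgp α).2 _)).symm
      have hb := hblock α ((1 - s) • zhat α + s • z α)
      rw [eGh α, updEq α s] at hb
      rw [ept] at hb
      rw [← EReal.coe_add, ← EReal.coe_add, EReal.coe_le_coe_iff] at hb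
      exact hb
    have h1 : ∀ α : A, (g α ((1 - s) • zhat α + s • z α)).toReal
        ≤ (1 - s) * Gh α + s * Gz α := by
      intro α
      have hub := hφle α s hs0 hs1
      exact EReal.toReal_le_toReal hub ((hgp α).2 _) (EReal.coe_ne_top _)
        |>.trans_eq (EReal.toReal_coe _)
    have h3 : h (zhat + s • (z - zhat)) ≤ (1 - s) * h zhat + s * h z := by
      have := hhc.2 (Set.mem_univ zhat) (Set.mem_univ z) (by linarith : (0:ℝ) ≤ 1 - s)
        hs0 (by ring)
      rwa [segEq, smul_eq_mul, smul_eq_mul] at this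
    have S2 : ∑ α : A, (Gh α + h zhat)
        ≤ ∑ α : A, ((g α ((1 - s) • zhat α + s • z α)).toReal
            + h (zhat + s • w α)) :=
      Finset.sum_le_sum fun α _ => h2 α
    have S1 : ∑ α : A, (g α ((1 - s) • zhat α + s • z α)).toReal
        ≤ ∑ α : A, ((1 - s) * Gh α + s * Gz α) :=
      Finset.sum_le_sum fun α _ => h1 α
    rw [Finset.sum_add_distrib, Finset.sum_const, Finset.card_univ, nsmul_eq_mul] at S2
    rw [Finset.sum_add_distrib, ← Finset.mul_sum, ← Finset.mul_sum] at S1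
    rw [Finset.sum_add_distrib] at S2
    simp only [hε, hD, hN]
    nlinarith [S1, S2, h3]
  -- ε has derivative 0 at 0
  have base : ∀ v : ∀ α : A, EuclideanSpace ℝ (Fin (n α)),
      HasDerivAt (fun s : ℝ => h (zhat + s • v)) (fderiv ℝ h zhat v) 0 := by
    intro v
    have p1 : HasDerivAt (fun s : ℝ => zhat + s • v) v 0 := by
      simpa using ((hasDerivAt_id (0 : ℝ)).smul_const v).const_add zhat
    have H := ((hhd (zhat + (0 : ℝ) • v)).hasFDerivAt).comp_hasDerivAt 0 p1
    rw [zero_smul, add_zero] at H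
    exact H
  have sum_der : HasDerivAt
      (fun s : ℝ => ∑ α : A, h (zhat + s • w α))
      (∑ α : A, fderiv ℝ h zhat (w α)) 0 :=
    HasDerivAt.fun_sum fun α _ => base (w α)
  have hsum_single : ∑ α : A, w α = z - zhat := by
    funext β
    rw [Finset.sum_apply]
    simp [hw, Fintype.sum_pi_single β (fun α => z α - zhat α)]
  have hzero : fderiv ℝ h zhat (z - zhat)
      - ∑ α : A, fderiv ℝ h zhat (w α) = 0 := by
    rw [← map_sum, hsum_single, sub_self]
  have hder : HasDerivAt ε 0 0 := by
    have e := ((base (z - zhat)).add_const ((N - 1) * h zhat)).sub sum_der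
    rw [hzero] at e
    exact e
  have hε0 : ε 0 = 0 := by
    simp only [hε, zero_smul, add_zero, Finset.sum_const, Finset.card_univ, nsmul_eq_mul]
    ring
  -- take the limit
  have hslope : Filter.Tendsto (fun s => ε s / s) (nhdsWithin 0 (Set.Ioi 0)) (nhds 0) := by
    have ht := hasDerivAt_iff_tendsto_slope.mp hder
    have ht' := ht.mono_left
      (nhdsWithin_mono (0 : ℝ) (fun x hx => ne_of_gt hx : Set.Ioi (0:ℝ) ⊆ {(0:ℝ)}ᶜ))
    refine ht'.congr fun s => ?_
    simp [slope_def_field, hε0, div_eq_mul_inv]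
  have hDpos : (0 : ℝ) ≤ D := by
    refine le_of_tendsto hslope ?_
    filter_upwards [Ioc_mem_nhdsGT_of_mem (Set.mem_Ico.mpr ⟨le_refl (0:ℝ), one_pos⟩)]
      with s hs
    rw [div_le_iff₀ hs.1]
    calc ε s ≤ s * D := key s hs.1.le hs.2
    _ = D * s := mul_comm _ _
  -- conclude
  have e1 : ∑ α : A, g α (zhat α) = ((∑ α : A, Gh α : ℝ) : EReal) := by
    rw [ecoe_sum]
    exact Finset.sum_congr rfl fun α _ => eGh α
  have e2 : ∑ α : A, g α (z α) = ((∑ α : A, Gz α : ℝ) : EReal) := by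
    rw [ecoe_sum]
    exact Finset.sum_congr rfl fun α _ => eGz α
  rw [e1, e2, ← EReal.coe_add, ← EReal.coe_add, EReal.coe_le_coe_iff]
  simp only [hD] at hDpos
  linarith
end
end
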